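/- If E is a nonempty compact topological space, then the preorder ≼ on E has a maximal element: there exists x ∈ E such that for all z ∈ E, if x ≼ z then z ≼ x. -/
import Mathlib


/-- `y ≼ x`: every open neighborhood of `x` contains a homeomorphic (open embedded)
copy of some open neighborhood of `y`. -/
def Preceq {E : Type*} [TopologicalSpace E] (y x : E) : Prop :=
  ∀ U : Set E, IsOpen U → x ∈ U →
    ∃ V : Set E, IsOpen V ∧ y ∈ V ∧ ∃ f : V → E, Topology.IsOpenEmbedding f ∧ Set.range f ⊆ U

lemma preceq_refl {E : Type*} [TopologicalSpace E] (y : E) : Preceq y y := by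
  intro U hU hy
  exact ⟨U, hU, hy, Subtype.val, hU.isOpenEmbedding_subtypeVal, by
    rintro x ⟨v, rfl⟩; exact v.2⟩

lemma preceq_trans {E : Type*} [TopologicalSpace E] {x y z : E}
    (hxy : Preceq x y) (hyz : Preceq y z) : Preceq x z := by
  intro U hU hz
  obtain ⟨V, hV, hyV, f, hf, hfU⟩ := hyz U hU hz
  obtain ⟨W, hW, hxW, g, hg, hgV⟩ := hxy V hV hyV
  refine ⟨W, hW, hxW, fun w => f ⟨g w, hgV ⟨w, rfl⟩⟩, ?_, ?_⟩
  · have hg' : Topology.IsOpenEmbedding (fun w : W => (⟨g w, hgV ⟨w, rfl⟩⟩ : V)) := by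
      refine Topology.IsOpenEmbedding.of_comp _ hV.isOpenEmbedding_subtypeVal ?_
      exact hg
    exact hf.comp hg'
  · rintro u ⟨w, rfl⟩
    exact hfU ⟨_, rfl⟩

lemma isClosed_upperset {E : Type*} [TopologicalSpace E] (y : E) :
    IsClosed {x : E | Preceq y x} := by
  rw [← isOpen_compl_iff]
  rw [isOpen_iff_forall_mem_open]
  intro x hx
  simp only [Set.mem_compl_iff, Set.mem_setOf_eq, Preceq, not_forall] at hx
  obtain ⟨U, hU, hxU, hno⟩ := hx
  refine ⟨U, ?_, hU, hxU⟩
  intro x' hx' hx'p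
  exact hno (hx'p U hU hx')

theorem exists_maximal_preceq (E : Type*) [TopologicalSpace E] [CompactSpace E] [Nonempty E] :
    ∃ x : E, ∀ z : E, Preceq x z → Preceq z x := by
  apply exists_maximal_of_chains_bounded (r := Preceq)
  · intro c hc
    rcases c.eq_empty_or_nonempty with rfl | hne
    · exact ⟨Classical.arbitrary E, by simp⟩
    · have hnc : Nonempty c := hne.to_subtype
      have key : (⋂ y : c, {x : E | Preceq (y : E) x}).Nonempty := by
        apply IsCompact.nonempty_iInter_of_directed_nonempty_isCompact_isClosed
        · intro i j
          rcases eq_or_ne (i : E) (j : E) with h | h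
          · exact ⟨j, fun x hx => show Preceq (i : E) x from h ▸ hx, subset_rfl⟩
          · rcases hc i.2 j.2 h with h' | h'
            · exact ⟨j, fun x hx => preceq_trans h' hx, subset_rfl⟩
            · exact ⟨i, subset_rfl, fun x hx => preceq_trans h' hx⟩
        · exact fun i => ⟨i, preceq_refl _⟩
        · exact fun i => (isClosed_upperset (i : E)).isCompact
        · exact fun i => isClosed_upperset (i : E)
      obtain ⟨x, hx⟩ := key
      simp only [Set.mem_iInter, Set.mem_setOf_eq] at hx
      exact ⟨x, fun y hy => hx ⟨y, hy⟩⟩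
  · exact fun hab hbc => preceq_trans hab hbc
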